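/- arXiv:1701.06985 — 2 statements merged into one kernel-verified Lean document; each statement's English description precedes it below -/
import Mathlib

section
/- Forcing gadget for consecutive color blocks: Let q ≥ 1 and consider vertices v and w, where v's allowed color set is A = {1,…,q} and w's is B = {q+1,…,2q}. For every pair (c, c') ∈ A × B with c' ≠ c + q there is a vertex u_{c,c'} adjacent to both v and w with list {c, c'}. Then in any proper list-coloring of this gadget graph, v receives color c if and only if w receives color c + q; moreover for any such pair (c, c+q) on (v,w), all vertices u_{c',c''} can be properly colored from their lists. -/
theorem stmt_18_general (q : ℕ) :
    -- In any proper list-coloring of the gadget (vertex `v` colored `a` from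
    -- `A = [1..q]`, vertex `w` colored `b` from `B = [q+1..2q]`, and each gadget
    -- vertex `u_{c,c'}` colored `g c c'` from its list `{c, c'}`, with `u_{c,c'}`
    -- adjacent to both `v` and `w`), `v` gets color `c` iff `w` gets color `c + q`:
    (∀ (a b : ℕ) (g : ℕ → ℕ → ℕ),
        a ∈ Finset.Icc 1 q → b ∈ Finset.Icc (q + 1) (2 * q) →
        (∀ c c', c ∈ Finset.Icc 1 q → c' ∈ Finset.Icc (q + 1) (2 * q) → c' ≠ c + q →
          (g c c' = c ∨ g c c' = c') ∧ g c c' ≠ a ∧ g c c' ≠ b) →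
        b = a + q) ∧
    -- and every such pair `(a, a + q)` on `(v, w)` extends to the gadget vertices:
    (∀ a ∈ Finset.Icc 1 q,
        ∃ g : ℕ → ℕ → ℕ,
          ∀ c c', c ∈ Finset.Icc 1 q → c' ∈ Finset.Icc (q + 1) (2 * q) → c' ≠ c + q →
            (g c c' = c ∨ g c c' = c') ∧ g c c' ≠ a ∧ g c c' ≠ a + q) := by
  refine ⟨fun a b g ha hb hg => ?_, fun a ha => ?_⟩
  · -- Otherwise `u_{a,b}` exists, and both colors of its list are taken by its neighbours `v`, `w`.
    by_contra hne
    obtain ⟨hlist, hne_a, hne_b⟩ := hg a b ha hb hne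
    exact hlist.elim hne_a hne_b
  · -- Color `u_{c,c'}` by `c` unless `c = a`; then `c' ≠ a + q` by assumption and `c' > q ≥ a`.
    refine ⟨fun c c' => if c = a then c' else c, fun c c' hc hc' hne => ?_⟩
    simp only [Finset.mem_Icc] at ha hc hc'
    dsimp only
    split_ifs <;> omega

theorem stmt_18 (q : ℕ) (hq : 1 ≤ q) :
    -- In any proper list-coloring of the gadget (vertex `v` colored `a` from
    -- `A = [1..q]`, vertex `w` colored `b` from `B = [q+1..2q]`, and each gadget
    -- vertex `u_{c,c'}` colored `g c c'` from its list `{c, c'}`, with `u_{c,c'}`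
    -- adjacent to both `v` and `w`), `v` gets color `c` iff `w` gets color `c + q`:
    (∀ (a b : ℕ) (g : ℕ → ℕ → ℕ),
        a ∈ Finset.Icc 1 q → b ∈ Finset.Icc (q + 1) (2 * q) →
        (∀ c c', c ∈ Finset.Icc 1 q → c' ∈ Finset.Icc (q + 1) (2 * q) → c' ≠ c + q →
          (g c c' = c ∨ g c c' = c') ∧ g c c' ≠ a ∧ g c c' ≠ b) →
        b = a + q) ∧
    -- and every such pair `(a, a + q)` on `(v, w)` extends to the gadget vertices:
    (∀ a ∈ Finset.Icc 1 q,
        ∃ g : ℕ → ℕ → ℕ,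
          ∀ c c', c ∈ Finset.Icc 1 q → c' ∈ Finset.Icc (q + 1) (2 * q) → c' ≠ c + q →
            (g c c' = c ∨ g c c' = c') ∧ g c c' ≠ a ∧ g c c' ≠ a + q) :=
  stmt_18_general q
end

section
/- Rigid alternating path: Let P be a path with vertices v_0, v_1, …, v_{6m}, v_{6m+1} (consecutive vertices adjacent), with lists Λ(v_0) = Λ(v_{6m+1}) = {2} and Λ(v_i) = {(i mod 3) + 1, ((i+1) mod 3) + 1} for 1 ≤ i ≤ 6m. Then (P, Λ) admits no proper list-coloring. Moreover, in any proper list-coloring of the subpath v_0, …, v_j (for j ≤ 6m), vertex v_i is forced to color ((i + 1) mod 3) + 1 for every 0 ≤ i ≤ j. -/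
theorem eq_of_adj_ne_of_mem_pair {α : Type*} (c γ : ℕ → α) (j : ℕ) (h0 : γ 0 = c 0)
    (hlist : ∀ i, i + 1 ≤ j → γ (i + 1) = c i ∨ γ (i + 1) = c (i + 1))
    (hne : ∀ i, i + 1 ≤ j → γ i ≠ γ (i + 1)) :
    ∀ i, i ≤ j → γ i = c i := by
  intro i
  induction i with
  | zero => exact fun _ => h0
  | succ k ih =>
    intro hk
    have hγk : γ k = c k := ih (by omega)
    exact (hlist k hk).resolve_left fun h => hne k hk (hγk.trans h.symm)

theorem alternatingPath_coloring_forced (j : ℕ) (γ : ℕ → ℕ) (h0 : γ 0 = 2)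
    (hlist : ∀ i, 1 ≤ i → i ≤ j → γ i = i % 3 + 1 ∨ γ i = (i + 1) % 3 + 1)
    (hne : ∀ i, i + 1 ≤ j → γ i ≠ γ (i + 1)) :
    ∀ i, i ≤ j → γ i = (i + 1) % 3 + 1 :=
  eq_of_adj_ne_of_mem_pair (fun i => (i + 1) % 3 + 1) γ j h0
    (fun i hi => hlist (i + 1) (by omega) hi) hne

theorem stmt_19 (m : ℕ) :
    -- The path `v_0, …, v_{6m+1}` with lists `Λ(v_0) = Λ(v_{6m+1}) = {2}` and
    -- `Λ(v_i) = {(i % 3) + 1, ((i+1) % 3) + 1}` admits no proper list-coloring: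
    (¬ ∃ γ : ℕ → ℕ,
        γ 0 = 2 ∧ γ (6 * m + 1) = 2 ∧
        (∀ i, 1 ≤ i → i ≤ 6 * m → γ i = i % 3 + 1 ∨ γ i = (i + 1) % 3 + 1) ∧
        (∀ i, i ≤ 6 * m → γ i ≠ γ (i + 1))) ∧
    -- and on the subpath `v_0, …, v_j` (j ≤ 6m) every proper list-coloring is
    -- forced to color `v_i` with `((i + 1) % 3) + 1`:
    (∀ j, j ≤ 6 * m → ∀ γ : ℕ → ℕ,
        γ 0 = 2 →
        (∀ i, 1 ≤ i → i ≤ j → γ i = i % 3 + 1 ∨ γ i = (i + 1) % 3 + 1) →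
        (∀ i, i + 1 ≤ j → γ i ≠ γ (i + 1)) →
        ∀ i, i ≤ j → γ i = (i + 1) % 3 + 1) := by
  refine ⟨?_, fun j _ => alternatingPath_coloring_forced j⟩
  rintro ⟨γ, h0, hlast, hlist, hne⟩
  have hforced : γ (6 * m) = (6 * m + 1) % 3 + 1 :=
    alternatingPath_coloring_forced (6 * m) γ h0 hlist (fun i hi => hne i (by omega)) (6 * m) le_rfl
  have hcolor : (6 * m + 1) % 3 + 1 = 2 := by omega
  exact hne (6 * m) le_rfl (hforced.trans (hcolor.trans hlast.symm))
end
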